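/- Let α ∈ ℝⁿ satisfy |η_j(α)| ≠ η₀ for every j ∈ {1,…,p}, and let β(α) ∈ ℝᵖ be defined by β(α)_j = 𝔅(η_j(α)). Then the duality gap satisfies the exact identity P(β(α)) − D(α) = ½‖X·β(α) − y − α‖². -/

import Mathlib

/-!
For arbitrary `β` and `α` the gap `P(β) − D(α)` splits into `½‖Xβ − y − α‖²` plus one
Fenchel–Young defect `g(β_j) + β_j x_jᵀα − Φ(x_jᵀα)` per coordinate, where
`g(b) = λ₁|b| + λ₂b² + λ₀[b ≠ 0]` and `Φ(τ) = min_b (g(b) + bτ)`. The thresholding map at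
`η = −τ/(2λ₂)` is a minimiser, so every defect vanishes: since `|τ| = 2λ₂|η|`, the cut-offs
defining `𝔅` and `Φ` are the same condition, and above it the identity is a completed square.
-/

namespace L0L1L2

noncomputable def penalty (l0 l1 l2 b : ℝ) : ℝ :=
  l1 * |b| + l2 * b ^ 2 + if b ≠ 0 then l0 else 0

noncomputable def threshold (l0 l1 l2 η : ℝ) : ℝ :=
  if (2 * Real.sqrt (l0 * l2) + l1) / (2 * l2) < |η| then
    Real.sign η * (|η| - l1 / (2 * l2))
  else 0

noncomputable def dualPenalty (l0 l1 l2 τ : ℝ) : ℝ :=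
  if 2 * Real.sqrt (l0 * l2) + l1 < |τ| then l0 - (|τ| - l1) ^ 2 / (4 * l2) else 0

lemma sign_mul_self_eq_abs (e : ℝ) : Real.sign e * e = |e| := by
  rcases lt_trichotomy e 0 with hneg | rfl | hpos
  · rw [Real.sign_of_neg hneg, abs_of_neg hneg, neg_one_mul]
  · simp
  · rw [Real.sign_of_pos hpos, abs_of_pos hpos, one_mul]

lemma abs_sign_of_ne_zero {e : ℝ} (he : e ≠ 0) : |Real.sign e| = 1 := by
  rcases Real.sign_apply_eq_of_ne_zero e he with h | h <;> simp [h]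

lemma penalty_threshold_add_mul {l1 l2 : ℝ} (l0 : ℝ) (hl1 : 0 ≤ l1) (hl2 : 0 < l2) (τ : ℝ) :
    penalty l0 l1 l2 (threshold l0 l1 l2 (-τ / (2 * l2)))
      + threshold l0 l1 l2 (-τ / (2 * l2)) * τ = dualPenalty l0 l1 l2 τ := by
  set e := -τ / (2 * l2)
  have hτ : τ = -(2 * l2 * e) := by simp only [e]; field_simp
  have habs : |τ| = 2 * l2 * |e| := by rw [hτ, abs_neg, abs_mul, abs_of_pos (by positivity)]
  have hiff : (2 * Real.sqrt (l0 * l2) + l1) / (2 * l2) < |e| ↔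
      2 * Real.sqrt (l0 * l2) + l1 < |τ| := by
    rw [habs, div_lt_iff₀ (by positivity), mul_comm |e|]
  unfold penalty threshold dualPenalty
  by_cases hc : (2 * Real.sqrt (l0 * l2) + l1) / (2 * l2) < |e|
  · have hce : l1 / (2 * l2) < |e| :=
      lt_of_le_of_lt (by gcongr; linarith [Real.sqrt_nonneg (l0 * l2)]) hc
    have he : e ≠ 0 := by
      rintro h
      rw [h, abs_zero] at hce
      linarith [show 0 ≤ l1 / (2 * l2) by positivity]
    set d := |e| - l1 / (2 * l2)
    have hd : 0 < d := by simp only [d]; linarith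
    have hb_abs : |Real.sign e * d| = d := by
      rw [abs_mul, abs_sign_of_ne_zero he, one_mul, abs_of_pos hd]
    have hb_mul : Real.sign e * d * e = d * |e| := by
      rw [mul_right_comm, sign_mul_self_eq_abs, mul_comm]
    have hb_sq : (Real.sign e * d) ^ 2 = d ^ 2 := by rw [← sq_abs, hb_abs]
    have hb : Real.sign e * d ≠ 0 := by rw [← abs_pos, hb_abs]; exact hd
    rw [if_pos hc, if_pos hb, if_pos (hiff.1 hc), hb_abs, hb_sq, habs, hτ, mul_neg, mul_left_comm,
      hb_mul]
    simp only [d]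
    field_simp
    ring
  · rw [if_neg hc, if_neg (mt hiff.2 hc)]
    simp

lemma sum_penalty {ι : Type*} [Fintype ι] (l0 l1 l2 : ℝ) (β : ι → ℝ) :
    l1 * ∑ j, |β j| + l2 * ∑ j, β j ^ 2 + l0 * ((Finset.univ.filter fun j => β j ≠ 0).card : ℝ)
      = ∑ j, penalty l0 l1 l2 (β j) := by
  simp only [penalty, Finset.sum_add_distrib, Finset.mul_sum, Finset.sum_ite, Finset.sum_const_zero,
    add_zero, Finset.sum_const, nsmul_eq_mul, mul_comm l0]

end L0L1L2

section DualityGap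

variable {m k : Type*} [Fintype m] [Fintype k]

lemma sum_mulVec_mul_comm (X : Matrix m k ℝ) (α : m → ℝ) (β : k → ℝ) :
    ∑ i, (∑ j, X i j * β j) * α i = ∑ j, β j * ∑ i, X i j * α i := by
  simp_rw [Finset.sum_mul, Finset.mul_sum]
  rw [Finset.sum_comm]
  exact Finset.sum_congr rfl fun j _ => Finset.sum_congr rfl fun i _ => by ring

lemma primal_sub_dual_eq (X : Matrix m k ℝ) (y α : m → ℝ) (β : k → ℝ) (g Φ : ℝ → ℝ) :
    ((1 / 2) * ∑ i, (y i - ∑ j, X i j * β j) ^ 2 + ∑ j, g (β j))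
      - (-(1 / 2) * ∑ i, α i ^ 2 - ∑ i, y i * α i + ∑ j, Φ (∑ i, X i j * α i))
      = (1 / 2) * ∑ i, ((∑ j, X i j * β j) - y i - α i) ^ 2
        + ∑ j, (g (β j) + β j * (∑ i, X i j * α i) - Φ (∑ i, X i j * α i)) := by
  have hres : ∑ i, ((∑ j, X i j * β j) - y i - α i) ^ 2
      = ∑ i, (y i - ∑ j, X i j * β j) ^ 2 + ∑ i, α i ^ 2 + 2 * ∑ i, y i * α i
        - 2 * ∑ i, (∑ j, X i j * β j) * α i := by
    simp only [Finset.mul_sum, ← Finset.sum_add_distrib, ← Finset.sum_sub_distrib]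
    exact Finset.sum_congr rfl fun i _ => by ring
  rw [hres, sum_mulVec_mul_comm, Finset.sum_sub_distrib, Finset.sum_add_distrib]
  ring

end DualityGap

theorem statement_8_general (l0 l1 l2 : ℝ) (hl1 : 0 < l1) (hl2 : 0 < l2)
    (n p : ℕ) (X : Matrix (Fin n) (Fin p) ℝ) (y : Fin n → ℝ)
    (Φ : ℝ → ℝ)
    (hΦ : ∀ t : ℝ, Φ t =
      if 2 * Real.sqrt (l0 * l2) + l1 < |t| then l0 - (|t| - l1) ^ 2 / (4 * l2)
      else 0)
    (B : ℝ → ℝ)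
    (hB : ∀ η : ℝ, B η =
      if (2 * Real.sqrt (l0 * l2) + l1) / (2 * l2) < |η| then
        Real.sign η * (|η| - l1 / (2 * l2))
      else 0)
    (P : (Fin p → ℝ) → ℝ)
    (hP : ∀ β : Fin p → ℝ, P β =
      (1 / 2) * (∑ i, (y i - ∑ j, X i j * β j) ^ 2)
        + l1 * (∑ j, |β j|) + l2 * (∑ j, (β j) ^ 2)
        + l0 * ((Finset.univ.filter fun j => β j ≠ 0).card : ℝ))
    (D : (Fin n → ℝ) → ℝ)
    (hD : ∀ α : Fin n → ℝ, D α =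
      -(1 / 2) * (∑ i, (α i) ^ 2) - (∑ i, y i * α i)
        + ∑ j, Φ (∑ i, X i j * α i))
    (α : Fin n → ℝ)
    (η : Fin p → ℝ)
    (hη : ∀ j, η j = -(∑ i, X i j * α i) / (2 * l2))
    (β : Fin p → ℝ)
    (hβ : ∀ j, β j = B (η j)) :
    P β - D α = (1 / 2) * ∑ i, ((∑ j, X i j * β j) - y i - α i) ^ 2 := by
  have hΦ' : Φ = L0L1L2.dualPenalty l0 l1 l2 := funext hΦ
  have hB' : B = L0L1L2.threshold l0 l1 l2 := funext hB
  have hPβ : P β =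
      (1 / 2) * ∑ i, (y i - ∑ j, X i j * β j) ^ 2 + ∑ j, L0L1L2.penalty l0 l1 l2 (β j) := by
    rw [hP, ← L0L1L2.sum_penalty]
    ring
  rw [hPβ, hD, primal_sub_dual_eq, add_eq_left]
  refine Finset.sum_eq_zero fun j _ => sub_eq_zero.2 ?_
  rw [hβ, hη, hB', hΦ']
  exact L0L1L2.penalty_threshold_add_mul l0 hl1.le hl2 _

/-- If |η_j(α)| ≠ η₀ for all j and β(α)_j = 𝔅(η_j(α)), then the
duality gap satisfies P(β(α)) − D(α) = ½‖X·β(α) − y − α‖². -/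
theorem statement_8 (l0 l1 l2 : ℝ) (hl0 : 0 < l0) (hl1 : 0 < l1) (hl2 : 0 < l2)
    (n p : ℕ) (X : Matrix (Fin n) (Fin p) ℝ) (y : Fin n → ℝ)
    (Φ : ℝ → ℝ)
    (hΦ : ∀ t : ℝ, Φ t =
      if 2 * Real.sqrt (l0 * l2) + l1 < |t| then l0 - (|t| - l1) ^ 2 / (4 * l2)
      else 0)
    (B : ℝ → ℝ)
    (hB : ∀ η : ℝ, B η =
      if (2 * Real.sqrt (l0 * l2) + l1) / (2 * l2) < |η| then
        Real.sign η * (|η| - l1 / (2 * l2))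
      else 0)
    (P : (Fin p → ℝ) → ℝ)
    (hP : ∀ β : Fin p → ℝ, P β =
      (1 / 2) * (∑ i, (y i - ∑ j, X i j * β j) ^ 2)
        + l1 * (∑ j, |β j|) + l2 * (∑ j, (β j) ^ 2)
        + l0 * ((Finset.univ.filter fun j => β j ≠ 0).card : ℝ))
    (D : (Fin n → ℝ) → ℝ)
    (hD : ∀ α : Fin n → ℝ, D α =
      -(1 / 2) * (∑ i, (α i) ^ 2) - (∑ i, y i * α i)
        + ∑ j, Φ (∑ i, X i j * α i))
    (α : Fin n → ℝ)
    (η : Fin p → ℝ)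
    (hη : ∀ j, η j = -(∑ i, X i j * α i) / (2 * l2))
    (hne : ∀ j, |η j| ≠ (2 * Real.sqrt (l0 * l2) + l1) / (2 * l2))
    (β : Fin p → ℝ)
    (hβ : ∀ j, β j = B (η j)) :
    P β - D α = (1 / 2) * ∑ i, ((∑ j, X i j * β j) - y i - α i) ^ 2 :=
  statement_8_general l0 l1 l2 hl1 hl2 n p X y Φ hΦ B hB P hP D hD α η hη β hβ
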